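/- arXiv:2310.13656 — 3 statements merged into one kernel-verified Lean document; each statement's English description precedes it below -/
import Mathlib

section
/- Let f ∈ L¹(Ω) be nonnegative. If E ⊂ Ω is a minimizer of P(E) = Per_s(E) − ∫_E f with P(E) ≥ 0, then χ_E is a nonnegative minimizer of F(u) = (1/2)[u]_{W^{s,1}(ℝⁿ)} − ∫_Ω fu over all nonnegative u ∈ W^{s,1}_0(Ω). -/
/-!
Testing minimality of `E` against `∅` gives `P(E) ≤ 0`, hence `P(E) = 0` and
`F(χ_E) = Per_s(E) - ∫_E f = 0`, while every admissible `A ⊆ Ω` satisfies `∫_A f ≤ Per_s(A)`.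
For a nonnegative admissible `v`, the superlevel sets `{v ≥ t}`, `t > 0`, lie in `Ω`, so the
layer-cake formula `∫_Ω f v = ∫_0^∞ ∫_{v ≥ t} f dt` and the coarea formula
`(1/2)[v] = ∫_0^∞ Per_s({v ≥ t}) dt` give `∫_Ω f v ≤ (1/2)[v]`, i.e. `F(v) ≥ 0 = F(χ_E)`.
The coarea formula is Tonelli applied to `|a - b| = ∫_0^∞ |1_{t ≤ a} - 1_{t ≤ b}| dt`.
-/

open MeasureTheory Set
open scoped ENNReal

noncomputable section

/-- The Gagliardo `W^{s,1}(ℝⁿ)` seminorm of `u`, as a double integral in `ℝ≥0∞`. -/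
def gag1 (n : ℕ) (s : ℝ) (u : EuclideanSpace ℝ (Fin n) → ℝ) : ℝ≥0∞ :=
  ∫⁻ x, ∫⁻ y, ENNReal.ofReal (|u x - u y| / dist x y ^ ((n : ℝ) + s))

/-- Admissible class `W^{s,1}_0(Ω)`: measurable functions vanishing outside `Ω` with finite
Gagliardo `W^{s,1}(ℝⁿ)` seminorm (and with `f·u` integrable on `Ω`, so that the energy is
well defined). -/
def Adm (n : ℕ) (s : ℝ) (Ω : Set (EuclideanSpace ℝ (Fin n)))
    (f u : EuclideanSpace ℝ (Fin n) → ℝ) : Prop :=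
  Measurable u ∧ (∀ x ∉ Ω, u x = 0) ∧ gag1 n s u ≠ ⊤ ∧
    IntegrableOn (fun x => f x * u x) Ω

/-- The energy `F(u) = (1/2)[u]_{W^{s,1}(ℝⁿ)} − ∫_Ω f u`. -/
def F1 (n : ℕ) (s : ℝ) (Ω : Set (EuclideanSpace ℝ (Fin n)))
    (f u : EuclideanSpace ℝ (Fin n) → ℝ) : ℝ :=
  (1 / 2) * (gag1 n s u).toReal - ∫ x in Ω, f x * u x

/-- The fractional `s`-perimeter of a set `A ⊆ ℝⁿ`. -/
def perS (n : ℕ) (s : ℝ) (A : Set (EuclideanSpace ℝ (Fin n))) : ℝ≥0∞ :=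
  (1 / 2) * gag1 n s (A.indicator fun _ => (1 : ℝ))

/-- The geometric functional `P(A) = Per_s(A) − ∫_A f`, valued in `EReal`. -/
def PE (n : ℕ) (s : ℝ) (f : EuclideanSpace ℝ (Fin n) → ℝ)
    (A : Set (EuclideanSpace ℝ (Fin n))) : EReal :=
  (perS n s A : EReal) - ((∫ x in A, f x : ℝ) : EReal)

/-- The weighted fractional `(s,f)`-Cheegar constant of `Ω`. -/
def cheeg (n : ℕ) (s : ℝ) (Ω : Set (EuclideanSpace ℝ (Fin n)))
    (f : EuclideanSpace ℝ (Fin n) → ℝ) : ℝ≥0∞ :=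
  sInf {r : ℝ≥0∞ | ∃ A : Set (EuclideanSpace ℝ (Fin n)), A ⊆ Ω ∧ MeasurableSet A ∧
    (0 < ∫ x in A, f x) ∧ r = perS n s A / ENNReal.ofReal (∫ x in A, f x)}

lemma abs_indicator_Ici_sub_indicator_Ici (a b t : ℝ) :
    |(Ici t).indicator (1 : ℝ → ℝ) a - (Ici t).indicator 1 b| =
      (Ioc (min a b) (max a b)).indicator 1 t := by
  wlog hab : a ≤ b generalizing a b
  · rw [abs_sub_comm, min_comm, max_comm]
    exact this b a (le_of_not_ge hab)
  rw [min_eq_left hab, max_eq_right hab]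
  by_cases hta : t ≤ a
  · simp [indicator, hta, hta.trans hab]
  · by_cases htb : t ≤ b <;> simp [indicator, hta, htb, lt_of_not_ge hta]

lemma ofReal_abs_sub_eq_lintegral_Ioi {a b : ℝ} (ha : 0 ≤ a) (hb : 0 ≤ b) :
    ENNReal.ofReal |a - b| =
      ∫⁻ t in Ioi (0 : ℝ), ENNReal.ofReal |(Ici t).indicator 1 a - (Ici t).indicator 1 b| := by
  have hsub : Ioc (min a b) (max a b) ⊆ Ioi 0 := fun t ht => (le_min ha hb).trans_lt ht.1
  simp_rw [abs_indicator_Ici_sub_indicator_Ici, ← Function.comp_apply (f := ENNReal.ofReal),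
    ← indicator_comp_of_zero ENNReal.ofReal_zero, Function.comp_def, Pi.one_apply,
    ENNReal.ofReal_one]
  rw [lintegral_indicator_const measurableSet_Ioc, one_mul,
    Measure.restrict_apply measurableSet_Ioc, inter_eq_self_of_subset_left hsub, Real.volume_Ioc,
    max_sub_min_eq_abs']

theorem lintegral_ofReal_abs_sub_mul_eq_lintegral_Ioi {β : Type*} [MeasurableSpace β]
    {ν : Measure β} [SFinite ν] {g h : β → ℝ} (hg : Measurable g) (hh : Measurable h)
    (hg0 : ∀ p, 0 ≤ g p) (hh0 : ∀ p, 0 ≤ h p) {K : β → ℝ≥0∞} (hK : Measurable K) :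
    ∫⁻ p, ENNReal.ofReal |g p - h p| * K p ∂ν =
      ∫⁻ t in Ioi (0 : ℝ), ∫⁻ p,
        ENNReal.ofReal |(Ici t).indicator 1 (g p) - (Ici t).indicator 1 (h p)| * K p ∂ν := by
  have hlevel : ∀ {φ : β → ℝ}, Measurable φ →
      Measurable fun q : β × ℝ => (Ici q.2).indicator (1 : ℝ → ℝ) (φ q.1) := fun hφ =>
    measurable_one.indicator (measurableSet_le measurable_snd (hφ.comp measurable_fst))
  have hjump := ((hlevel hg).sub (hlevel hh)).abs.ennreal_ofReal
  calc ∫⁻ p, ENNReal.ofReal |g p - h p| * K p ∂ν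
      = ∫⁻ p, (∫⁻ t in Ioi (0 : ℝ),
          ENNReal.ofReal |(Ici t).indicator 1 (g p) - (Ici t).indicator 1 (h p)| * K p) ∂ν := by
        refine lintegral_congr fun p => ?_
        rw [ofReal_abs_sub_eq_lintegral_Ioi (hg0 p) (hh0 p)]
        exact (lintegral_mul_const _ (hjump.comp measurable_prodMk_left)).symm
    _ = _ := lintegral_lintegral_swap (hjump.mul (hK.comp measurable_fst)).aemeasurable

theorem lintegral_mul_ofReal_eq_lintegral_superlevelSet {α : Type*} [MeasurableSpace α]
    {μ : Measure α} {w : α → ℝ≥0∞} (hw : AEMeasurable w μ) {v : α → ℝ} (hv : Measurable v)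
    (hv0 : ∀ x, 0 ≤ v x) :
    ∫⁻ x, w x * ENNReal.ofReal (v x) ∂μ = ∫⁻ t in Ioi (0 : ℝ), ∫⁻ x in {x | t ≤ v x}, w x ∂μ := by
  have h := lintegral_withDensity_eq_lintegral_mul₀ hw hv.ennreal_ofReal.aemeasurable
  rw [Pi.mul_def] at h
  rw [← h, lintegral_eq_lintegral_meas_le _ (ae_of_all _ hv0) hv.aemeasurable]
  exact lintegral_congr fun t => withDensity_apply _ (measurableSet_le measurable_const hv)

section Gagliardo

variable {n : ℕ} {s : ℝ}

lemma gag1_eq_lintegral_prod {u : EuclideanSpace ℝ (Fin n) → ℝ} (hu : Measurable u) :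
    gag1 n s u = ∫⁻ p, ENNReal.ofReal |u p.1 - u p.2| *
      ENNReal.ofReal (dist p.1 p.2 ^ ((n : ℝ) + s))⁻¹ ∂(volume.prod volume) := by
  rw [gag1, lintegral_lintegral]
  · simp only [div_eq_mul_inv, ENNReal.ofReal_mul (abs_nonneg _)]
  · fun_prop

theorem gag1_eq_lintegral_gag1_superlevelSet {v : EuclideanSpace ℝ (Fin n) → ℝ}
    (hv : Measurable v) (hv0 : ∀ x, 0 ≤ v x) :
    gag1 n s v = ∫⁻ t in Ioi (0 : ℝ), gag1 n s ({x | t ≤ v x}.indicator fun _ => 1) := by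
  refine (gag1_eq_lintegral_prod hv).trans <|
    (lintegral_ofReal_abs_sub_mul_eq_lintegral_Ioi (hv.comp measurable_fst)
      (hv.comp measurable_snd) (fun _ => hv0 _) (fun _ => hv0 _) (by fun_prop)).trans <|
    lintegral_congr fun t => ?_
  rw [gag1_eq_lintegral_prod (measurable_const.indicator (measurableSet_le measurable_const hv))]
  rfl

end Gagliardo

lemma EReal.coe_le_coe_ennreal_iff {r : ℝ} {a : ℝ≥0∞} :
    (r : EReal) ≤ a ↔ ENNReal.ofReal r ≤ a := by
  rw [← EReal.coe_ennreal_le_coe_ennreal_iff, EReal.coe_ennreal_ofReal,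
    EReal.coe_strictMono.monotone.map_max, EReal.coe_zero, max_le_iff,
    and_iff_left (EReal.coe_ennreal_nonneg a)]

lemma EReal.le_ofReal_of_coe_ennreal_le_coe {a : ℝ≥0∞} {r : ℝ} (h : (a : EReal) ≤ r) :
    a ≤ ENNReal.ofReal r := by
  have hr : (0 : EReal) ≤ r := (EReal.coe_ennreal_nonneg a).trans h
  rwa [← EReal.coe_ennreal_le_coe_ennreal_iff, EReal.coe_ennreal_ofReal,
    max_eq_left (EReal.coe_nonneg.1 hr)]

section PE

variable {n : ℕ} {s : ℝ} {f : EuclideanSpace ℝ (Fin n) → ℝ} {A : Set (EuclideanSpace ℝ (Fin n))}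

lemma PE_empty : PE n s f ∅ = 0 := by
  simp [PE, perS, gag1]

lemma PE_nonneg_iff : 0 ≤ PE n s f A ↔ ENNReal.ofReal (∫ x in A, f x) ≤ perS n s A := by
  rw [PE, EReal.sub_nonneg (Or.inr (EReal.coe_ne_top _)) (Or.inl (EReal.coe_ennreal_ne_bot _)),
    EReal.coe_le_coe_ennreal_iff]

lemma perS_le_ofReal_of_PE_nonpos (h : PE n s f A ≤ 0) :
    perS n s A ≤ ENNReal.ofReal (∫ x in A, f x) :=
  EReal.le_ofReal_of_coe_ennreal_le_coe (EReal.sub_nonpos.1 h)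

end PE

lemma mul_indicator_one_eq_indicator {α M₀ : Type*} [MulZeroOneClass M₀] (E : Set α)
    (f : α → M₀) : (fun x => f x * E.indicator (fun _ => 1) x) = E.indicator f := by
  ext x
  rw [← indicator_mul_right]
  simp only [mul_one]

section Energy

variable {n : ℕ} {s : ℝ} {Ω E : Set (EuclideanSpace ℝ (Fin n))} {f : EuclideanSpace ℝ (Fin n) → ℝ}

lemma F1_indicator (hE : E ⊆ Ω) (hEm : MeasurableSet E) :
    F1 n s Ω f (E.indicator fun _ => 1) = (perS n s E).toReal - ∫ x in E, f x := by
  rw [F1, perS, ENNReal.toReal_mul, mul_indicator_one_eq_indicator, setIntegral_indicator hEm,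
    inter_eq_self_of_subset_right hE]
  norm_num

lemma adm_indicator (hE : E ⊆ Ω) (hEm : MeasurableSet E) (hf : IntegrableOn f Ω)
    (hper : perS n s E ≠ ⊤) : Adm n s Ω f (E.indicator fun _ => 1) := by
  refine ⟨measurable_const.indicator hEm, fun x hx => indicator_of_notMem (fun h => hx (hE h)) _,
    fun h => hper ?_, ?_⟩
  · rw [perS, h, ENNReal.mul_top (by norm_num)]
  · rw [mul_indicator_one_eq_indicator]
    exact hf.indicator hEm

theorem ofReal_setIntegral_mul_le_half_gag1 (hΩ : MeasurableSet Ω) (hf0 : ∀ x ∈ Ω, 0 ≤ f x)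
    (hf : IntegrableOn f Ω)
    (hsub : ∀ A ⊆ Ω, MeasurableSet A → ENNReal.ofReal (∫ x in A, f x) ≤ perS n s A)
    {v : EuclideanSpace ℝ (Fin n) → ℝ} (hv : Measurable v) (hv0 : ∀ x, 0 ≤ v x)
    (hvΩ : ∀ x ∉ Ω, v x = 0) (hfv : IntegrableOn (fun x => f x * v x) Ω) :
    ENNReal.ofReal (∫ x in Ω, f x * v x) ≤ 1 / 2 * gag1 n s v := by
  have hlevel_meas (t : ℝ) : MeasurableSet {x | t ≤ v x} := measurableSet_le measurable_const hv
  have hlevel_sub {t : ℝ} (ht : 0 < t) : {x | t ≤ v x} ⊆ Ω := fun x hx => by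
    by_contra hxΩ
    exact (ht.trans_le hx).ne' (hvΩ x hxΩ)
  calc ENNReal.ofReal (∫ x in Ω, f x * v x)
      = ∫⁻ x in Ω, ENNReal.ofReal (f x) * ENNReal.ofReal (v x) := by
        rw [ofReal_integral_eq_lintegral_ofReal hfv
          (ae_restrict_of_forall_mem hΩ fun x hx => mul_nonneg (hf0 x hx) (hv0 x))]
        exact setLIntegral_congr_fun hΩ fun x hx => ENNReal.ofReal_mul (hf0 x hx)
    _ = ∫⁻ t in Ioi (0 : ℝ), ∫⁻ x in {x | t ≤ v x} ∩ Ω, ENNReal.ofReal (f x) := by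
        rw [lintegral_mul_ofReal_eq_lintegral_superlevelSet hf.aemeasurable.ennreal_ofReal hv hv0]
        simp_rw [Measure.restrict_restrict (hlevel_meas _)]
    _ ≤ ∫⁻ t in Ioi (0 : ℝ), perS n s {x | t ≤ v x} := by
        refine setLIntegral_mono' measurableSet_Ioi fun t ht => ?_
        have hA := hlevel_sub ht
        rw [inter_eq_self_of_subset_left hA, ← ofReal_integral_eq_lintegral_ofReal (hf.mono_set hA)
          (ae_restrict_of_forall_mem (hlevel_meas t) fun x hx => hf0 x (hA hx))]
        exact hsub _ hA (hlevel_meas t)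
    _ = 1 / 2 * gag1 n s v := by
        rw [gag1_eq_lintegral_gag1_superlevelSet hv hv0, ← lintegral_const_mul' _ _ (by norm_num)]
        rfl

theorem F1_nonneg (hΩ : MeasurableSet Ω) (hf0 : ∀ x ∈ Ω, 0 ≤ f x) (hf : IntegrableOn f Ω)
    (hsub : ∀ A ⊆ Ω, MeasurableSet A → ENNReal.ofReal (∫ x in A, f x) ≤ perS n s A)
    {v : EuclideanSpace ℝ (Fin n) → ℝ} (hv : Adm n s Ω f v) (hv0 : ∀ x, 0 ≤ v x) :
    0 ≤ F1 n s Ω f v := by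
  obtain ⟨hvm, hvΩ, hvfin, hfv⟩ := hv
  have hbound := ofReal_setIntegral_mul_le_half_gag1 hΩ hf0 hf hsub hvm hv0 hvΩ hfv
  rw [ENNReal.ofReal_le_iff_le_toReal (ENNReal.mul_ne_top (by norm_num) hvfin),
    ENNReal.toReal_mul] at hbound
  rw [F1, sub_nonneg]
  simpa using hbound

end Energy

theorem stmt7_general (n : ℕ) (s : ℝ) (Ω E : Set (EuclideanSpace ℝ (Fin n)))
    (f : EuclideanSpace ℝ (Fin n) → ℝ)
    (hΩo : IsOpen Ω)
    (hf0 : ∀ x ∈ Ω, 0 ≤ f x) (hf : IntegrableOn f Ω)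
    (hE : E ⊆ Ω) (hEm : MeasurableSet E)
    (hmin : ∀ F : Set (EuclideanSpace ℝ (Fin n)), F ⊆ Ω → MeasurableSet F →
      PE n s f E ≤ PE n s f F)
    (hpos : 0 ≤ PE n s f E) :
    Adm n s Ω f (E.indicator fun _ => (1 : ℝ)) ∧
    (∀ x, 0 ≤ E.indicator (fun _ => (1 : ℝ)) x) ∧
    ∀ v, Adm n s Ω f v → (∀ x, 0 ≤ v x) →
      F1 n s Ω f (E.indicator fun _ => (1 : ℝ)) ≤ F1 n s Ω f v := by
  have hsub : ∀ A ⊆ Ω, MeasurableSet A → ENNReal.ofReal (∫ x in A, f x) ≤ perS n s A :=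
    fun A hA hAm => PE_nonneg_iff.1 (hpos.trans (hmin A hA hAm))
  have hperE : perS n s E = ENNReal.ofReal (∫ x in E, f x) :=
    le_antisymm (perS_le_ofReal_of_PE_nonpos (PE_empty ▸ hmin ∅ (empty_subset Ω) .empty))
      (hsub E hE hEm)
  have hF1E : F1 n s Ω f (E.indicator fun _ => 1) = 0 := by
    rw [F1_indicator hE hEm, hperE,
      ENNReal.toReal_ofReal (setIntegral_nonneg hEm fun x hx => hf0 x (hE hx)), sub_self]
  refine ⟨adm_indicator hE hEm hf (hperE ▸ ENNReal.ofReal_ne_top),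
    fun x => indicator_nonneg (fun _ _ => zero_le_one) x, fun v hv hv0 => ?_⟩
  rw [hF1E]
  exact F1_nonneg hΩo.measurableSet hf0 hf hsub hv hv0

/-- If `E ⊆ Ω` minimizes `P(E) = Per_s(E) − ∫_E f` (with nonnegative `f ∈ L¹(Ω)`) and
`P(E) ≥ 0`, then `χ_E` is a nonnegative minimizer of
`F(u) = (1/2)[u]_{W^{s,1}(ℝⁿ)} − ∫_Ω f u` over all nonnegative `u ∈ W^{s,1}_0(Ω)`. -/
theorem stmt7 (n : ℕ) (s : ℝ) (Ω E : Set (EuclideanSpace ℝ (Fin n)))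
    (f : EuclideanSpace ℝ (Fin n) → ℝ)
    (hΩo : IsOpen Ω) (hΩb : Bornology.IsBounded Ω)
    (hs0 : 0 < s) (hs1 : s < 1)
    (hf0 : ∀ x ∈ Ω, 0 ≤ f x) (hf : IntegrableOn f Ω)
    (hE : E ⊆ Ω) (hEm : MeasurableSet E)
    (hmin : ∀ F : Set (EuclideanSpace ℝ (Fin n)), F ⊆ Ω → MeasurableSet F →
      PE n s f E ≤ PE n s f F)
    (hpos : 0 ≤ PE n s f E) :
    Adm n s Ω f (E.indicator fun _ => (1 : ℝ)) ∧
    (∀ x, 0 ≤ E.indicator (fun _ => (1 : ℝ)) x) ∧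
    ∀ v, Adm n s Ω f v → (∀ x, 0 ≤ v x) →
      F1 n s Ω f (E.indicator fun _ => (1 : ℝ)) ≤ F1 n s Ω f v :=
  stmt7_general n s Ω E f hΩo hf0 hf hE hEm hmin hpos

end
end

section
/- Let f ≥ 0 satisfy f ∈ L^{n/σ}(Ω), σ ∈ (0,s), with positive integral on some ball inside Ω. If the weighted fractional Cheegar constant satisfies h^f_s(Ω) < 1, then inf{ (1/2)[u]_{W^{s,1}(ℝⁿ)} − ∫_Ω fu : u ∈ W^{s,1}_0(Ω) } = −∞. -/
open MeasureTheory Set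
open scoped ENNReal

noncomputable section

/-!
A set `A ⊆ Ω` whose Cheeger quotient `Per_s(A) / ∫_A f` is below `1` has negative geometric
energy `Per_s(A) − ∫_A f`. Its characteristic function is admissible with
`F(χ_A) = Per_s(A) − ∫_A f < 0`, and `F` is positively `1`-homogeneous, so `F(λ χ_A) → −∞`.
-/

open Filter

section

variable {n : ℕ} {s : ℝ} {Ω A : Set (EuclideanSpace ℝ (Fin n))} {f : EuclideanSpace ℝ (Fin n) → ℝ}

theorem gag1_const_mul (u : EuclideanSpace ℝ (Fin n) → ℝ) {c : ℝ} (hc : 0 ≤ c) :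
    gag1 n s (fun x => c * u x) = ENNReal.ofReal c * gag1 n s u := by
  rw [gag1, gag1, ← lintegral_const_mul' _ _ ENNReal.ofReal_ne_top]
  refine lintegral_congr fun x => ?_
  rw [← lintegral_const_mul' _ _ ENNReal.ofReal_ne_top]
  refine lintegral_congr fun y => ?_
  rw [← mul_sub, abs_mul, abs_of_nonneg hc, mul_div_assoc, ENNReal.ofReal_mul hc]

theorem exists_perS_lt_integral_of_cheeg_lt_one (h : cheeg n s Ω f < 1) :
    ∃ A ⊆ Ω, MeasurableSet A ∧ IntegrableOn f A ∧
      perS n s A < ENNReal.ofReal (∫ x in A, f x) := by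
  obtain ⟨_, ⟨A, hAΩ, hA, hpos, rfl⟩, hlt⟩ := sInf_lt_iff.mp h
  have hI : ENNReal.ofReal (∫ x in A, f x) ≠ 0 := (ENNReal.ofReal_pos.mpr hpos).ne'
  rw [ENNReal.div_lt_iff (Or.inl hI) (Or.inl ENNReal.ofReal_ne_top), one_mul] at hlt
  exact ⟨A, hAΩ, hA, Integrable.of_integral_ne_zero hpos.ne', hlt⟩

theorem mul_const_mul_indicator_one (c : ℝ) (x : EuclideanSpace ℝ (Fin n)) :
    f x * (c * A.indicator (fun _ => (1 : ℝ)) x) = c * A.indicator f x := by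
  by_cases hx : x ∈ A <;> simp [hx, mul_comm]

theorem adm_const_mul_indicator (hAΩ : A ⊆ Ω) (hA : MeasurableSet A) (hf : IntegrableOn f A)
    (hper : perS n s A ≠ ⊤) {c : ℝ} (hc : 0 ≤ c) :
    Adm n s Ω f (fun x => c * A.indicator (fun _ => (1 : ℝ)) x) := by
  have hgag : gag1 n s (A.indicator fun _ => (1 : ℝ)) ≠ ⊤ := by
    rw [perS] at hper
    exact fun htop => hper (by rw [htop, ENNReal.mul_top (by norm_num)])
  refine ⟨measurable_const.mul (measurable_const.indicator hA), fun x hx => ?_, ?_, ?_⟩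
  · simp [indicator_of_notMem (fun hxA => hx (hAΩ hxA))]
  · rw [gag1_const_mul _ hc]
    exact ENNReal.mul_ne_top ENNReal.ofReal_ne_top hgag
  · have : IntegrableOn (A.indicator f) Ω := ((integrable_indicator_iff hA).mpr hf).integrableOn
    simpa only [IntegrableOn, mul_const_mul_indicator_one] using this.const_mul c

theorem F1_const_mul_indicator (hAΩ : A ⊆ Ω) (hA : MeasurableSet A) {c : ℝ} (hc : 0 ≤ c) :
    F1 n s Ω f (fun x => c * A.indicator (fun _ => (1 : ℝ)) x) =
      c * ((perS n s A).toReal - ∫ x in A, f x) := by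
  have hint : ∫ x in Ω, A.indicator f x = ∫ x in A, f x := by
    rw [setIntegral_indicator hA, inter_eq_self_of_subset_right hAΩ]
  simp only [F1, mul_const_mul_indicator_one, integral_const_mul, hint, gag1_const_mul _ hc,
    perS, ENNReal.toReal_mul, ENNReal.toReal_ofReal hc]
  norm_num
  ring

end

theorem stmt11_general (n : ℕ) (s : ℝ) (Ω : Set (EuclideanSpace ℝ (Fin n)))
    (f : EuclideanSpace ℝ (Fin n) → ℝ)
    (hcheeg : cheeg n s Ω f < 1) :
    ∀ M : ℝ, ∃ u, Adm n s Ω f u ∧ F1 n s Ω f u < M := by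
  intro M
  obtain ⟨A, hAΩ, hA, hf, hper⟩ := exists_perS_lt_integral_of_cheeg_lt_one hcheeg
  have henergy : (perS n s A).toReal - ∫ x in A, f x < 0 :=
    sub_neg.mpr (ENNReal.toReal_lt_of_lt_ofReal hper)
  have hscale : Tendsto (fun c : ℝ => c * ((perS n s A).toReal - ∫ x in A, f x)) atTop atBot :=
    tendsto_id.atTop_mul_const_of_neg henergy
  obtain ⟨c, hcM, hc⟩ := ((hscale.eventually_lt_atBot M).and (eventually_ge_atTop 0)).exists
  exact ⟨_, adm_const_mul_indicator hAΩ hA hf hper.ne_top hc,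
    (F1_const_mul_indicator hAΩ hA hc).trans_lt hcM⟩

/-- If the weighted fractional Cheegar constant satisfies `h^f_s(Ω) < 1` (with `f ≥ 0`,
`f ∈ L^{n/σ}(Ω)` for some `σ ∈ (0,s)`, and `∫_B f > 0` on some ball `B ⊆ Ω`), then
`inf { (1/2)[u]_{W^{s,1}(ℝⁿ)} − ∫_Ω f u : u ∈ W^{s,1}_0(Ω) } = −∞`. -/
theorem stmt11 (n : ℕ) (s σ : ℝ) (Ω : Set (EuclideanSpace ℝ (Fin n)))
    (f : EuclideanSpace ℝ (Fin n) → ℝ)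
    (hΩo : IsOpen Ω) (hΩb : Bornology.IsBounded Ω)
    (hs0 : 0 < s) (hs1 : s < 1) (hσ0 : 0 < σ) (hσs : σ < s)
    (hf0 : ∀ x ∈ Ω, 0 ≤ f x)
    (hf : MemLp f (ENNReal.ofReal ((n : ℝ) / σ)) (volume.restrict Ω))
    (x₀ : EuclideanSpace ℝ (Fin n)) (r₀ : ℝ) (hr₀ : 0 < r₀)
    (hball : Metric.ball x₀ r₀ ⊆ Ω) (hfball : 0 < ∫ x in Metric.ball x₀ r₀, f x)
    (hcheeg : cheeg n s Ω f < 1) :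
    ∀ M : ℝ, ∃ u, Adm n s Ω f u ∧ F1 n s Ω f u < M :=
  stmt11_general n s Ω f hcheeg

end
end

section
/- Let u₁, u₂ ∈ W^{s,1}_0(Ω) be two weak solutions of (−Δ)^s_1 u = f with associated sign fields z₁, z₂ (each zᵢ ∈ L^∞(ℝ^{2n}), ‖zᵢ‖_∞ ≤ 1, antisymmetric, zᵢ ∈ sgn(uᵢ(x)−uᵢ(y)) a.e., and satisfying the weak formulation against all test functions in W^{s,1}_0(Ω)). Then for i, j ∈ {1,2}, z_j(x,y) ∈ sgn(u_i(x)−u_i(y)) almost everywhere on ℝ^{2n} \ (ℝⁿ\Ω)². -/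
open MeasureTheory Set
open scoped ENNReal

noncomputable section

lemma mul_le_abs_of_abs_le_one {z : ℝ} (hz : |z| ≤ 1) (t : ℝ) : z * t ≤ |t| :=
  calc z * t ≤ |z * t| := le_abs_self _
    _ = |z| * |t| := abs_mul z t
    _ ≤ |t| := mul_le_of_le_one_left (abs_nonneg t) hz

section SignField

variable {X : Type*} [MeasurableSpace X] {μ : Measure (X × X)}

lemma ae_mul_sub_eq_abs_of_eq_zero_outside {Ω : Set X} {u : X → ℝ} {z : X → X → ℝ}
    (hu : ∀ x ∉ Ω, u x = 0)
    (hz : ∀ᵐ p ∂μ, (p.1 ∈ Ω ∨ p.2 ∈ Ω) → z p.1 p.2 * (u p.1 - u p.2) = |u p.1 - u p.2|) :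
    ∀ᵐ p ∂μ, z p.1 p.2 * (u p.1 - u p.2) = |u p.1 - u p.2| := by
  filter_upwards [hz] with p hp
  by_cases hpΩ : p.1 ∈ Ω ∨ p.2 ∈ Ω
  · exact hp hpΩ
  · obtain ⟨hx, hy⟩ := not_or.1 hpΩ
    simp [hu _ hx, hu _ hy]

/-- `|z| ≤ 1` puts the integrand of `z` pointwise below that of the sign field `z'`, so equal
integrals squeeze the two together a.e. -/
lemma ae_mul_sub_eq_abs_of_integral_eq [MetricSpace X] {u : X → ℝ} {z z' : X → X → ℝ} {r : ℝ}
    (hz : ∀ x y, |z x y| ≤ 1)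
    (hz' : ∀ᵐ p ∂μ, z' p.1 p.2 * (u p.1 - u p.2) = |u p.1 - u p.2|)
    (hzi : Integrable (fun p => z p.1 p.2 * (u p.1 - u p.2) / dist p.1 p.2 ^ r) μ)
    (hz'i : Integrable (fun p => z' p.1 p.2 * (u p.1 - u p.2) / dist p.1 p.2 ^ r) μ)
    (heq : ∫ p, z p.1 p.2 * (u p.1 - u p.2) / dist p.1 p.2 ^ r ∂μ
      = ∫ p, z' p.1 p.2 * (u p.1 - u p.2) / dist p.1 p.2 ^ r ∂μ) :
    ∀ᵐ p ∂μ, z p.1 p.2 * (u p.1 - u p.2) = |u p.1 - u p.2| := by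
  have hz'abs : (fun p => z' p.1 p.2 * (u p.1 - u p.2) / dist p.1 p.2 ^ r)
      =ᵐ[μ] fun p => |u p.1 - u p.2| / dist p.1 p.2 ^ r := by
    filter_upwards [hz'] with p hp
    rw [hp]
  have hle : (fun p => z p.1 p.2 * (u p.1 - u p.2) / dist p.1 p.2 ^ r)
      ≤ᵐ[μ] fun p => |u p.1 - u p.2| / dist p.1 p.2 ^ r :=
    ae_of_all _ fun p => div_le_div_of_nonneg_right (mul_le_abs_of_abs_le_one (hz _ _) _)
      (Real.rpow_nonneg dist_nonneg r)
  have hae := (integral_eq_iff_of_ae_le hzi (hz'i.congr hz'abs) hle).1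
    (heq.trans (integral_congr_ae hz'abs))
  filter_upwards [hae] with p hp
  rcases eq_or_ne p.1 p.2 with hdiag | hoff
  · simp [hdiag]
  · exact (div_left_inj' (Real.rpow_pos_of_pos (dist_pos.2 hoff) r).ne').1 hp

end SignField

/-- Membership `z ∈ sgn(t)` (given `|z| ≤ 1`) is encoded as `z·t = |t|`. -/
theorem stmt13_general (n : ℕ) (s : ℝ) (Ω : Set (EuclideanSpace ℝ (Fin n)))
    (f u₁ u₂ : EuclideanSpace ℝ (Fin n) → ℝ)
    (z₁ z₂ : EuclideanSpace ℝ (Fin n) → EuclideanSpace ℝ (Fin n) → ℝ)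
    (hu₁ : Adm n s Ω f u₁) (hu₂ : Adm n s Ω f u₂)
    (hz₁_bd : ∀ x y, |z₁ x y| ≤ 1) (hz₂_bd : ∀ x y, |z₂ x y| ≤ 1)
    (hz₁_sgn : ∀ᵐ p : EuclideanSpace ℝ (Fin n) × EuclideanSpace ℝ (Fin n),
      (p.1 ∈ Ω ∨ p.2 ∈ Ω) → z₁ p.1 p.2 * (u₁ p.1 - u₁ p.2) = |u₁ p.1 - u₁ p.2|)
    (hz₂_sgn : ∀ᵐ p : EuclideanSpace ℝ (Fin n) × EuclideanSpace ℝ (Fin n),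
      (p.1 ∈ Ω ∨ p.2 ∈ Ω) → z₂ p.1 p.2 * (u₂ p.1 - u₂ p.2) = |u₂ p.1 - u₂ p.2|)
    (hz₁_int : ∀ w, Adm n s Ω f w →
      Integrable (fun p : EuclideanSpace ℝ (Fin n) × EuclideanSpace ℝ (Fin n) =>
        z₁ p.1 p.2 * (w p.1 - w p.2) / dist p.1 p.2 ^ ((n : ℝ) + s)))
    (hz₂_int : ∀ w, Adm n s Ω f w →
      Integrable (fun p : EuclideanSpace ℝ (Fin n) × EuclideanSpace ℝ (Fin n) =>
        z₂ p.1 p.2 * (w p.1 - w p.2) / dist p.1 p.2 ^ ((n : ℝ) + s)))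
    (hz₁_weak : ∀ w, Adm n s Ω f w →
      (1 / 2) * ∫ p : EuclideanSpace ℝ (Fin n) × EuclideanSpace ℝ (Fin n),
          z₁ p.1 p.2 * (w p.1 - w p.2) / dist p.1 p.2 ^ ((n : ℝ) + s)
        = ∫ x in Ω, f x * w x)
    (hz₂_weak : ∀ w, Adm n s Ω f w →
      (1 / 2) * ∫ p : EuclideanSpace ℝ (Fin n) × EuclideanSpace ℝ (Fin n),
          z₂ p.1 p.2 * (w p.1 - w p.2) / dist p.1 p.2 ^ ((n : ℝ) + s)
        = ∫ x in Ω, f x * w x) :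
    (∀ᵐ p : EuclideanSpace ℝ (Fin n) × EuclideanSpace ℝ (Fin n),
      (p.1 ∈ Ω ∨ p.2 ∈ Ω) → z₁ p.1 p.2 * (u₂ p.1 - u₂ p.2) = |u₂ p.1 - u₂ p.2|) ∧
    (∀ᵐ p : EuclideanSpace ℝ (Fin n) × EuclideanSpace ℝ (Fin n),
      (p.1 ∈ Ω ∨ p.2 ∈ Ω) → z₂ p.1 p.2 * (u₁ p.1 - u₁ p.2) = |u₁ p.1 - u₁ p.2|) := by
  constructor
  · filter_upwards [ae_mul_sub_eq_abs_of_integral_eq hz₁_bd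
      (ae_mul_sub_eq_abs_of_eq_zero_outside hu₂.2.1 hz₂_sgn) (hz₁_int u₂ hu₂)
      (hz₂_int u₂ hu₂) (by linarith [hz₁_weak u₂ hu₂, hz₂_weak u₂ hu₂])] with p hp _ using hp
  · filter_upwards [ae_mul_sub_eq_abs_of_integral_eq hz₂_bd
      (ae_mul_sub_eq_abs_of_eq_zero_outside hu₁.2.1 hz₁_sgn) (hz₂_int u₁ hu₁)
      (hz₁_int u₁ hu₁) (by linarith [hz₁_weak u₁ hu₁, hz₂_weak u₁ hu₁])] with p hp _ using hp

/-- If `u₁, u₂ ∈ W^{s,1}_0(Ω)` are two weak solutions of `(−Δ)^s_1 u = f` with sign fields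
`z₁, z₂`, then each `z_j(x,y) ∈ sgn(u_i(x)−u_i(y))` a.e. on `ℝ^{2n} \ (Ωᶜ)²` for
`i, j ∈ {1,2}`.  Membership `z ∈ sgn(t)` (given `|z| ≤ 1`) is encoded as `z·t = |t|`. -/
theorem stmt13 (n : ℕ) (s : ℝ) (Ω : Set (EuclideanSpace ℝ (Fin n)))
    (f u₁ u₂ : EuclideanSpace ℝ (Fin n) → ℝ)
    (z₁ z₂ : EuclideanSpace ℝ (Fin n) → EuclideanSpace ℝ (Fin n) → ℝ)
    (hΩo : IsOpen Ω) (hΩb : Bornology.IsBounded Ω)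
    (hs0 : 0 < s) (hs1 : s < 1)
    (hf : MemLp f (ENNReal.ofReal ((n : ℝ) / s)) (volume.restrict Ω))
    (hu₁ : Adm n s Ω f u₁) (hu₂ : Adm n s Ω f u₂)
    (hz₁_meas : Measurable fun p : EuclideanSpace ℝ (Fin n) × EuclideanSpace ℝ (Fin n) =>
      z₁ p.1 p.2)
    (hz₂_meas : Measurable fun p : EuclideanSpace ℝ (Fin n) × EuclideanSpace ℝ (Fin n) =>
      z₂ p.1 p.2)
    (hz₁_bd : ∀ x y, |z₁ x y| ≤ 1) (hz₂_bd : ∀ x y, |z₂ x y| ≤ 1)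
    (hz₁_anti : ∀ x y, z₁ y x = - z₁ x y) (hz₂_anti : ∀ x y, z₂ y x = - z₂ x y)
    (hz₁_sgn : ∀ᵐ p : EuclideanSpace ℝ (Fin n) × EuclideanSpace ℝ (Fin n),
      (p.1 ∈ Ω ∨ p.2 ∈ Ω) → z₁ p.1 p.2 * (u₁ p.1 - u₁ p.2) = |u₁ p.1 - u₁ p.2|)
    (hz₂_sgn : ∀ᵐ p : EuclideanSpace ℝ (Fin n) × EuclideanSpace ℝ (Fin n),
      (p.1 ∈ Ω ∨ p.2 ∈ Ω) → z₂ p.1 p.2 * (u₂ p.1 - u₂ p.2) = |u₂ p.1 - u₂ p.2|)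
    (hz₁_int : ∀ w, Adm n s Ω f w →
      Integrable (fun p : EuclideanSpace ℝ (Fin n) × EuclideanSpace ℝ (Fin n) =>
        z₁ p.1 p.2 * (w p.1 - w p.2) / dist p.1 p.2 ^ ((n : ℝ) + s)))
    (hz₂_int : ∀ w, Adm n s Ω f w →
      Integrable (fun p : EuclideanSpace ℝ (Fin n) × EuclideanSpace ℝ (Fin n) =>
        z₂ p.1 p.2 * (w p.1 - w p.2) / dist p.1 p.2 ^ ((n : ℝ) + s)))
    (hz₁_weak : ∀ w, Adm n s Ω f w →
      (1 / 2) * ∫ p : EuclideanSpace ℝ (Fin n) × EuclideanSpace ℝ (Fin n),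
          z₁ p.1 p.2 * (w p.1 - w p.2) / dist p.1 p.2 ^ ((n : ℝ) + s)
        = ∫ x in Ω, f x * w x)
    (hz₂_weak : ∀ w, Adm n s Ω f w →
      (1 / 2) * ∫ p : EuclideanSpace ℝ (Fin n) × EuclideanSpace ℝ (Fin n),
          z₂ p.1 p.2 * (w p.1 - w p.2) / dist p.1 p.2 ^ ((n : ℝ) + s)
        = ∫ x in Ω, f x * w x) :
    (∀ᵐ p : EuclideanSpace ℝ (Fin n) × EuclideanSpace ℝ (Fin n),
      (p.1 ∈ Ω ∨ p.2 ∈ Ω) → z₁ p.1 p.2 * (u₂ p.1 - u₂ p.2) = |u₂ p.1 - u₂ p.2|) ∧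
    (∀ᵐ p : EuclideanSpace ℝ (Fin n) × EuclideanSpace ℝ (Fin n),
      (p.1 ∈ Ω ∨ p.2 ∈ Ω) → z₂ p.1 p.2 * (u₁ p.1 - u₁ p.2) = |u₁ p.1 - u₁ p.2|) :=
  stmt13_general n s Ω f u₁ u₂ z₁ z₂ hu₁ hu₂ hz₁_bd hz₂_bd hz₁_sgn hz₂_sgn hz₁_int hz₂_int hz₁_weak
    hz₂_weak

end
end
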